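/- Let φ = ⋀_{i=1}^ℓ ⋁_{j=1}^3 l_{i,j} be a propositional 3-CNF formula over variables v_1, …, v_n. Define the ABox A_φ = {False(a), Bool(a)} ∪ {Var(v_k) | 1 ≤ k ≤ n} ∪ {clause(a, c_i) | 1 ≤ i ≤ ℓ} ∪ {pos_j(c_i, v_k) | l_{i,j} = v_k} ∪ {neg_j(c_i, v_k) | l_{i,j} = ¬v_k}, and the EL_⊥ TBox T consisting of: Bool ⊑ True; True ⊓ False ⊑ ⊥; ∃clause.False ⊑ True; Var ⊑ ∃val.Bool; ∃val.True ⊑ True; ∃val.False ⊑ False; and for every choice (X_1, X_2, X_3) with X_j ∈ {pos_j.False, neg_j.True}, the axiom ∃X_1 ⊓ ∃X_2 ⊓ ∃X_3 ⊑ False. Let ω assign weight ∞ to every axiom and assertion except Bool ⊑ True, which gets weight 1. Then φ is satisfiable if and only if (T, A_φ)_ω is 1-satisfiable. -/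

import Mathlib

namespace DL

/-! ### Syntax -/

abbrev IndName := ℕ
abbrev CName := ℕ
abbrev RName := ℕ

/-- Roles: role names and inverse roles. -/
inductive Role where
  | name : RName → Role
  | inv  : RName → Role
deriving DecidableEq

/-- `ALCHIO` concepts. -/
inductive Concept where
  | top  : Concept
  | bot  : Concept
  | atom : CName → Concept
  | nom  : IndName → Concept
  | neg  : Concept → Concept
  | conj : Concept → Concept → Concept
  | ex   : Role → Concept → Concept
deriving DecidableEq

/-- TBox axioms: concept inclusions and role inclusions. -/
inductive Axiom where
  | ci : Concept → Concept → Axiom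
  | ri : Role → Role → Axiom
deriving DecidableEq

/-- ABox assertions. -/
inductive Assertion where
  | ca : CName → IndName → Assertion
  | ra : RName → IndName → IndName → Assertion
deriving DecidableEq

/-! ### Interpretations -/

/-- A DL interpretation with domain a subset of a universe `U`.  Individual names are
interpreted via `indI` (under the standard names assumption, the individual names of the
ABox under consideration are interpreted "as themselves", i.e. injectively). -/
structure Interp (U : Type) where
  dom : Set U
  indI : IndName → U
  cI : CName → Set U
  rI : RName → Set (U × U)
  cI_sub : ∀ A, cI A ⊆ dom
  rI_sub : ∀ r p, p ∈ rI r → p.1 ∈ dom ∧ p.2 ∈ dom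

variable {U : Type}

/-- Every individual name denotes an element of the domain. -/
def Interp.Proper (I : Interp U) : Prop := ∀ a, I.indI a ∈ I.dom

def Role.interp (I : Interp U) : Role → Set (U × U)
  | Role.name r => I.rI r
  | Role.inv r  => {p | (p.2, p.1) ∈ I.rI r}

def Concept.interp (I : Interp U) : Concept → Set U
  | Concept.top => I.dom
  | Concept.bot => ∅
  | Concept.atom A => I.cI A
  | Concept.nom a => {I.indI a} ∩ I.dom
  | Concept.neg C => I.dom \ Concept.interp I C
  | Concept.conj C D => Concept.interp I C ∩ Concept.interp I D
  | Concept.ex r C => {d | ∃ e, (d, e) ∈ Role.interp I r ∧ e ∈ Concept.interp I C}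

def Assertion.sat (I : Interp U) : Assertion → Prop
  | Assertion.ca A a => I.indI a ∈ I.cI A
  | Assertion.ra r a b => (I.indI a, I.indI b) ∈ I.rI r

/-! ### Violations and cost -/

/-- Violations of a concept inclusion `C ⊑ D`. -/
def vioCI (I : Interp U) (C D : Concept) : Set U :=
  Concept.interp I C \ Concept.interp I D

/-- Violations of a role inclusion `r ⊑ s`. -/
def vioRI (I : Interp U) (r s : Role) : Set (U × U) :=
  Role.interp I r \ Role.interp I s

/-- The number of violations of an axiom. -/
noncomputable def Axiom.vioCount (I : Interp U) : Axiom → ℕ∞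
  | Axiom.ci C D => (vioCI I C D).encard
  | Axiom.ri r s => (vioRI I r s).encard

open Classical in
/-- The cost of an interpretation w.r.t. a weighted knowledge base `(T, A)` with weight
functions `wT` (on TBox axioms) and `wA` (on ABox assertions). -/
noncomputable def cost (T : Finset Axiom) (A : Finset Assertion)
    (wT : Axiom → ℕ∞) (wA : Assertion → ℕ∞) (I : Interp U) : ℕ∞ :=
  (∑ τ ∈ T, wT τ * Axiom.vioCount I τ) +
    ∑ α ∈ A, (if Assertion.sat I α then 0 else wA α)

/-! ### Queries -/

inductive Term where
  | var : ℕ → Term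
  | ind : IndName → Term
deriving DecidableEq

inductive QAtom where
  | ca : CName → Term → QAtom
  | ra : RName → Term → Term → QAtom
deriving DecidableEq

/-- A Boolean conjunctive query: a finite set of atoms, all of whose variables are
(implicitly) existentially quantified. -/
abbrev BCQ := Finset QAtom

def Term.eval (I : Interp U) (π : ℕ → U) : Term → U
  | Term.var v => π v
  | Term.ind a => I.indI a

def QAtom.sat (I : Interp U) (π : ℕ → U) : QAtom → Prop
  | QAtom.ca A t => Term.eval I π t ∈ I.cI A
  | QAtom.ra r t t' => (Term.eval I π t, Term.eval I π t') ∈ I.rI r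

/-- Satisfaction of a BCQ in an interpretation. -/
def satQ (I : Interp U) (q : BCQ) : Prop :=
  ∃ π : ℕ → U, (∀ v, π v ∈ I.dom) ∧ ∀ a ∈ q, QAtom.sat I π a

/-- An instance query is a BCQ with a single atom. -/
def IsIQ (q : BCQ) : Prop := ∃ a : QAtom, q = {a}

/-! ### Cost-based semantics -/

/-- `k`-satisfiability: some interpretation has cost at most `k`. -/
def ksat (T : Finset Axiom) (A : Finset Assertion)
    (wT : Axiom → ℕ∞) (wA : Assertion → ℕ∞) (k : ℕ) : Prop :=
  ∃ (U : Type) (I : Interp U), I.Proper ∧ cost T A wT wA I ≤ (k : ℕ∞)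

/-- `K ⊨ₚᵏ q`: some interpretation of cost at most `k` satisfies `q`. -/
def satP (T : Finset Axiom) (A : Finset Assertion)
    (wT : Axiom → ℕ∞) (wA : Assertion → ℕ∞) (k : ℕ) (q : BCQ) : Prop :=
  ∃ (U : Type) (I : Interp U), I.Proper ∧ cost T A wT wA I ≤ (k : ℕ∞) ∧ satQ I q

/-- `K ⊨꜀ᵏ q`: every interpretation of cost at most `k` satisfies `q`. -/
def satC (T : Finset Axiom) (A : Finset Assertion)
    (wT : Axiom → ℕ∞) (wA : Assertion → ℕ∞) (k : ℕ) (q : BCQ) : Prop :=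
  ∀ (U : Type) (I : Interp U), I.Proper → cost T A wT wA I ≤ (k : ℕ∞) → satQ I q

/-- The optimal cost of a weighted knowledge base. -/
noncomputable def optCost (T : Finset Axiom) (A : Finset Assertion)
    (wT : Axiom → ℕ∞) (wA : Assertion → ℕ∞) : ℕ∞ :=
  sInf {c : ℕ∞ | ∃ (U : Type) (I : Interp U), I.Proper ∧ cost T A wT wA I = c}

/-- `K ⊨ₚᵒᵖᵗ q`: some interpretation of optimal cost satisfies `q`. -/
noncomputable def satPopt (T : Finset Axiom) (A : Finset Assertion)
    (wT : Axiom → ℕ∞) (wA : Assertion → ℕ∞) (q : BCQ) : Prop :=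
  ∃ (U : Type) (I : Interp U), I.Proper ∧ cost T A wT wA I = optCost T A wT wA ∧ satQ I q

/-- `K ⊨꜀ᵒᵖᵗ q`: every interpretation of optimal cost satisfies `q`. -/
noncomputable def satCopt (T : Finset Axiom) (A : Finset Assertion)
    (wT : Axiom → ℕ∞) (wA : Assertion → ℕ∞) (q : BCQ) : Prop :=
  ∀ (U : Type) (I : Interp U), I.Proper → cost T A wT wA I = optCost T A wT wA → satQ I q

/-! ### Occurrences of symbols -/

def Role.base : Role → RName
  | Role.name r => r
  | Role.inv r => r

def Concept.cnames : Concept → Finset CName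
  | Concept.atom A => {A}
  | Concept.neg C => C.cnames
  | Concept.conj C D => C.cnames ∪ D.cnames
  | Concept.ex _ C => C.cnames
  | _ => ∅

def Concept.rnames : Concept → Finset RName
  | Concept.neg C => C.rnames
  | Concept.conj C D => C.rnames ∪ D.rnames
  | Concept.ex r C => insert r.base C.rnames
  | _ => ∅

def Concept.indNames : Concept → Finset IndName
  | Concept.nom a => {a}
  | Concept.neg C => C.indNames
  | Concept.conj C D => C.indNames ∪ D.indNames
  | Concept.ex _ C => C.indNames
  | _ => ∅

def Axiom.cnames : Axiom → Finset CName
  | Axiom.ci C D => C.cnames ∪ D.cnames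
  | Axiom.ri _ _ => ∅

def Axiom.rnames : Axiom → Finset RName
  | Axiom.ci C D => C.rnames ∪ D.rnames
  | Axiom.ri r s => {r.base, s.base}

def Axiom.indNames : Axiom → Finset IndName
  | Axiom.ci C D => C.indNames ∪ D.indNames
  | Axiom.ri _ _ => ∅

def Assertion.cnames : Assertion → Finset CName
  | Assertion.ca A _ => {A}
  | Assertion.ra _ _ _ => ∅

def Assertion.rnames : Assertion → Finset RName
  | Assertion.ca _ _ => ∅
  | Assertion.ra r _ _ => {r}

def Assertion.indNames : Assertion → Finset IndName
  | Assertion.ca _ a => {a}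
  | Assertion.ra _ a b => {a, b}

/-- The individual names occurring in an ABox. -/
def aboxInds (A : Finset Assertion) : Finset IndName := A.biUnion Assertion.indNames

/-- The individual names occurring in a KB. -/
def kbInds (T : Finset Axiom) (A : Finset Assertion) : Finset IndName :=
  T.biUnion Axiom.indNames ∪ aboxInds A

def Term.indNames : Term → Finset IndName
  | Term.var _ => ∅
  | Term.ind a => {a}

def QAtom.indNames : QAtom → Finset IndName
  | QAtom.ca _ t => t.indNames
  | QAtom.ra _ t t' => t.indNames ∪ t'.indNames

def QAtom.cnames : QAtom → Finset CName
  | QAtom.ca A _ => {A}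
  | QAtom.ra _ _ _ => ∅

def qInds (q : BCQ) : Finset IndName := q.biUnion QAtom.indNames

def qCnames (q : BCQ) : Finset CName := q.biUnion QAtom.cnames

/-! ### Sizes -/

def Concept.size : Concept → ℕ
  | Concept.top => 1
  | Concept.bot => 1
  | Concept.atom _ => 1
  | Concept.nom _ => 1
  | Concept.neg C => C.size + 1
  | Concept.conj C D => C.size + D.size + 1
  | Concept.ex _ C => C.size + 2

def Axiom.size : Axiom → ℕ
  | Axiom.ci C D => C.size + D.size + 1
  | Axiom.ri _ _ => 3

def Assertion.size : Assertion → ℕ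
  | Assertion.ca _ _ => 2
  | Assertion.ra _ _ _ => 3

def tboxSize (T : Finset Axiom) : ℕ := ∑ τ ∈ T, τ.size

def aboxSize (A : Finset Assertion) : ℕ := ∑ α ∈ A, α.size

/-! ### DL-Lite fragments -/

/-- Basic concepts: concept names and unqualified existential restrictions `∃r` (with a
possibly inverse role `r`), the latter rendered as `∃r.⊤`. -/
inductive IsBasic : Concept → Prop
  | atom (A : CName) : IsBasic (Concept.atom A)
  | ex (r : Role) : IsBasic (Concept.ex r Concept.top)

/-- A `DL-Lite_core` axiom: `B ⊑ C` or `B ⊓ C ⊑ ⊥` with `B, C` basic concepts. -/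
def IsCoreAxiom (τ : Axiom) : Prop :=
  (∃ B C, τ = Axiom.ci B C ∧ IsBasic B ∧ IsBasic C) ∨
  (∃ B C, τ = Axiom.ci (Concept.conj B C) Concept.bot ∧ IsBasic B ∧ IsBasic C)

def IsDLLiteCore (T : Finset Axiom) : Prop := ∀ τ ∈ T, IsCoreAxiom τ

/-- Concepts built from basic concepts using `¬`, `⊓` (and hence also `⊔`). -/
inductive IsBoolConcept : Concept → Prop
  | basic {C} : IsBasic C → IsBoolConcept C
  | neg {C} : IsBoolConcept C → IsBoolConcept (Concept.neg C)
  | conj {C D} : IsBoolConcept C → IsBoolConcept D → IsBoolConcept (Concept.conj C D)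

/-- A `DL-Lite_bool^H` axiom: a concept inclusion between Boolean combinations of basic
concepts, or a role inclusion. -/
def IsBoolHAxiom (τ : Axiom) : Prop :=
  (∃ C D, τ = Axiom.ci C D ∧ IsBoolConcept C ∧ IsBoolConcept D) ∨ (∃ r s, τ = Axiom.ri r s)

def IsDLLiteBoolH (T : Finset Axiom) : Prop := ∀ τ ∈ T, IsBoolHAxiom τ

/-! Encoding of a 3-CNF formula `φ = ⋀_{i<ℓ} ⋁_{j<3} l_{i,j}` over variables `v_0,…,v_{n-1}`:
`φ i j = (b, v)` where `b = true` iff the `j`-th literal of the `i`-th clause is the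
positive literal `v` (and `b = false` iff it is `¬v`). -/

/-- concept names -/
def cFalse : CName := 0
def cBool : CName := 1
def cTrue : CName := 2
def cVar : CName := 3

/-- role names -/
def rClause : RName := 0
def rVal : RName := 1
def rPos (j : Fin 3) : RName := 2 + (j : ℕ)
def rNeg (j : Fin 3) : RName := 5 + (j : ℕ)

/-- individual names -/
def aN : IndName := 0
def vN (n : ℕ) (k : Fin n) : IndName := 1 + (k : ℕ)
def cN (n ℓ : ℕ) (i : Fin ℓ) : IndName := 1 + n + (i : ℕ)

/-- The ABox `A_φ`. -/
def cnfAbox (ℓ n : ℕ) (φ : Fin ℓ → Fin 3 → Bool × Fin n) : Finset Assertion :=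
  {Assertion.ca cFalse aN, Assertion.ca cBool aN} ∪
  (Finset.univ.image fun k : Fin n => Assertion.ca cVar (vN n k)) ∪
  (Finset.univ.image fun i : Fin ℓ => Assertion.ra rClause aN (cN n ℓ i)) ∪
  (Finset.univ.image fun p : Fin ℓ × Fin 3 =>
    if (φ p.1 p.2).1 then Assertion.ra (rPos p.2) (cN n ℓ p.1) (vN n (φ p.1 p.2).2)
    else Assertion.ra (rNeg p.2) (cN n ℓ p.1) (vN n (φ p.1 p.2).2))

/-- `X_j ∈ {∃pos_j.False, ∃neg_j.True}` according to the choice `f j`. -/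
def comboCNF (f : Fin 3 → Bool) (j : Fin 3) : Concept :=
  if f j then Concept.ex (Role.name (rPos j)) (Concept.atom cFalse)
  else Concept.ex (Role.name (rNeg j)) (Concept.atom cTrue)

/-- The `EL_⊥` TBox `T`. -/
def cnfTbox : Finset Axiom :=
  {Axiom.ci (Concept.atom cBool) (Concept.atom cTrue),
   Axiom.ci (Concept.conj (Concept.atom cTrue) (Concept.atom cFalse)) Concept.bot,
   Axiom.ci (Concept.ex (Role.name rClause) (Concept.atom cFalse)) (Concept.atom cTrue),
   Axiom.ci (Concept.atom cVar) (Concept.ex (Role.name rVal) (Concept.atom cBool)),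
   Axiom.ci (Concept.ex (Role.name rVal) (Concept.atom cTrue)) (Concept.atom cTrue),
   Axiom.ci (Concept.ex (Role.name rVal) (Concept.atom cFalse)) (Concept.atom cFalse)} ∪
  (Finset.univ.image fun f : Fin 3 → Bool =>
    Axiom.ci (Concept.conj (Concept.conj (comboCNF f 0) (comboCNF f 1)) (comboCNF f 2))
      (Concept.atom cFalse))

/-! Given a satisfying assignment `ν`, interpret over `ℕ` with every name as itself, and take
`a` and a fresh element as the truth values false and true: both are in `Bool`, only the latter
in `True`. Let `val` send `v_k` to its value and put `v_k` in `True` or `False` accordingly. The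
only violation is then `a` for `Bool ⊑ True`, at cost 1.

Conversely, at cost at most 1 every hard axiom and assertion holds and `Bool ⊑ True` has at most
one violation, which must be `a ∈ False \ True`. So `Bool ⊆ True ∪ False`, hence every `v_k`,
through its `val`-successor, lies in `True ∪ False`; let `ν k` be true iff `v_k ∈ True`. A clause
all of whose literals are false under `ν` would put `c_i` in `False` by the axioms
`∃X_1 ⊓ ∃X_2 ⊓ ∃X_3 ⊑ False`, and then `a ∈ ∃clause.False ⊆ True`, a contradiction. -/

section Cost

variable {T : Finset Axiom} {A : Finset Assertion} {β : Axiom} {w k : ℕ∞}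

@[simp] lemma Concept.interp_atom (I : Interp U) (A : CName) :
    (Concept.atom A).interp I = I.cI A := rfl

@[simp] lemma Concept.interp_ex_name (I : Interp U) (r : RName) (C : Concept) :
    (Concept.ex (Role.name r) C).interp I = {d | ∃ e, (d, e) ∈ I.rI r ∧ e ∈ C.interp I} := rfl

lemma Axiom.vioCount_ci_eq_zero_iff (I : Interp U) (C D : Concept) :
    (Axiom.ci C D).vioCount I = 0 ↔ C.interp I ⊆ D.interp I :=
  Set.encard_eq_zero.trans Set.sdiff_eq_empty

open Classical in
theorem cost_le_iff_of_hard_except (hβ : β ∈ T) (hk : k ≠ ⊤) (I : Interp U) :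
    cost T A (fun τ => if τ = β then w else ⊤) (fun _ => ⊤) I ≤ k ↔
      (∀ α ∈ A, α.sat I) ∧ (∀ τ ∈ T, τ ≠ β → τ.vioCount I = 0) ∧ w * β.vioCount I ≤ k := by
  have hT : ∑ τ ∈ T, (if τ = β then w else ⊤) * τ.vioCount I =
      w * β.vioCount I + ∑ τ ∈ T.erase β, ⊤ * τ.vioCount I := by
    rw [← Finset.add_sum_erase T _ hβ, if_pos rfl]
    congr 1
    exact Finset.sum_congr rfl fun τ hτ => by rw [if_neg (Finset.ne_of_mem_erase hτ)]
  rw [cost, hT]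
  constructor
  · intro h
    have hne_top : ∀ {x}, x ≤ k → x ≠ ⊤ := fun hx => ne_top_of_le_ne_top hk hx
    refine ⟨fun α hα => ?_, fun τ hτ hne => ?_, le_self_add.trans (le_self_add.trans h)⟩
    · by_contra hsat
      have := Finset.single_le_sum (f := fun α => if α.sat I then 0 else (⊤ : ℕ∞))
        (fun _ _ => zero_le) hα
      rw [if_neg hsat] at this
      exact hne_top (le_add_self.trans h) (top_le_iff.1 this)
    · by_contra hvio
      have := Finset.single_le_sum (f := fun τ => ⊤ * τ.vioCount I) (fun _ _ => zero_le)
        (Finset.mem_erase.2 ⟨hne, hτ⟩)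
      rw [ENat.top_mul hvio] at this
      exact hne_top (le_add_self.trans (le_self_add.trans h)) (top_le_iff.1 this)
  · rintro ⟨hA, hT, hβ⟩
    have hTerase : ∑ τ ∈ T.erase β, ⊤ * τ.vioCount I = 0 := Finset.sum_eq_zero fun τ hτ => by
      rw [hT τ (Finset.mem_erase.1 hτ).2 (Finset.mem_erase.1 hτ).1, mul_zero]
    rw [hTerase, Finset.sum_eq_zero fun α hα => if_pos (hA α hα)]
    simpa using hβ

end Cost

section Encoding

variable {ℓ n : ℕ}

def litRole (b : Bool) (j : Fin 3) : RName := if b then rPos j else rNeg j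

/-- The concept name a variable must belong to for a literal of polarity `b` on it to be false. -/
def litFalse (b : Bool) : CName := if b then cFalse else cTrue

lemma litRole_inj {b b' : Bool} {j j' : Fin 3} :
    litRole b j = litRole b' j' ↔ b = b' ∧ j = j' := by
  fin_cases j <;> fin_cases j' <;> cases b <;> cases b' <;> decide

lemma litRole_ne_rClause (b : Bool) (j : Fin 3) : litRole b j ≠ rClause := by
  fin_cases j <;> cases b <;> decide

lemma litRole_ne_rVal (b : Bool) (j : Fin 3) : litRole b j ≠ rVal := by
  fin_cases j <;> cases b <;> decide

lemma comboCNF_eq (f : Fin 3 → Bool) (j : Fin 3) :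
    comboCNF f j = Concept.ex (Role.name (litRole (f j) j)) (Concept.atom (litFalse (f j))) := by
  unfold comboCNF litRole litFalse
  cases f j <;> rfl

lemma forall_mem_cnfTbox {P : Axiom → Prop} :
    (∀ τ ∈ cnfTbox, P τ) ↔
      P (Axiom.ci (Concept.atom cBool) (Concept.atom cTrue)) ∧
      P (Axiom.ci (Concept.conj (Concept.atom cTrue) (Concept.atom cFalse)) Concept.bot) ∧
      P (Axiom.ci (Concept.ex (Role.name rClause) (Concept.atom cFalse)) (Concept.atom cTrue)) ∧
      P (Axiom.ci (Concept.atom cVar) (Concept.ex (Role.name rVal) (Concept.atom cBool))) ∧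
      P (Axiom.ci (Concept.ex (Role.name rVal) (Concept.atom cTrue)) (Concept.atom cTrue)) ∧
      P (Axiom.ci (Concept.ex (Role.name rVal) (Concept.atom cFalse)) (Concept.atom cFalse)) ∧
      ∀ f : Fin 3 → Bool, P (Axiom.ci
        (Concept.conj (Concept.conj (comboCNF f 0) (comboCNF f 1)) (comboCNF f 2))
        (Concept.atom cFalse)) := by
  simp [cnfTbox, or_imp, forall_and]

lemma forall_mem_cnfAbox {φ : Fin ℓ → Fin 3 → Bool × Fin n} {P : Assertion → Prop} :
    (∀ α ∈ cnfAbox ℓ n φ, P α) ↔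
      P (Assertion.ca cFalse aN) ∧ P (Assertion.ca cBool aN) ∧
      (∀ k, P (Assertion.ca cVar (vN n k))) ∧
      (∀ i, P (Assertion.ra rClause aN (cN n ℓ i))) ∧
      ∀ i j, P (Assertion.ra (litRole (φ i j).1 j) (cN n ℓ i) (vN n (φ i j).2)) := by
  have hlit : ∀ i j, (if (φ i j).1 then Assertion.ra (rPos j) (cN n ℓ i) (vN n (φ i j).2)
      else Assertion.ra (rNeg j) (cN n ℓ i) (vN n (φ i j).2)) =
      Assertion.ra (litRole (φ i j).1 j) (cN n ℓ i) (vN n (φ i j).2) := fun i j => by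
    unfold litRole; split <;> rfl
  simp only [cnfAbox, Finset.mem_union, Finset.mem_insert, Finset.mem_singleton,
    Finset.mem_image, Finset.mem_univ, true_and, Prod.exists, hlit, or_imp, forall_and,
    forall_eq, forall_exists_index]
  simp only [forall_comm (α := Assertion), forall_eq', and_assoc]

@[simp] lemma vN_inj {k k' : Fin n} : vN n k = vN n k' ↔ k = k' := by
  rw [Fin.ext_iff]; show 1 + (k : ℕ) = 1 + k' ↔ _; omega

@[simp] lemma cN_inj {i i' : Fin ℓ} : cN n ℓ i = cN n ℓ i' ↔ i = i' := by
  rw [Fin.ext_iff]; show 1 + n + (i : ℕ) = 1 + n + i' ↔ _; omega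

@[simp] lemma aN_ne_vN (k : Fin n) : aN ≠ vN n k := by
  show 0 ≠ 1 + (k : ℕ); omega

@[simp] lemma vN_ne_aN (k : Fin n) : vN n k ≠ aN := (aN_ne_vN k).symm

@[simp] lemma aN_ne_cN (i : Fin ℓ) : aN ≠ cN n ℓ i := by
  show 0 ≠ 1 + n + (i : ℕ); omega

@[simp] lemma cN_ne_aN (i : Fin ℓ) : cN n ℓ i ≠ aN := (aN_ne_cN i).symm

@[simp] lemma vN_ne_cN (k : Fin n) (i : Fin ℓ) : vN n k ≠ cN n ℓ i := by
  show 1 + (k : ℕ) ≠ 1 + n + (i : ℕ); omega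

lemma cnfTbox_vioCount_eq_zero_iff (I : Interp U) :
    (∀ τ ∈ cnfTbox, τ ≠ Axiom.ci (Concept.atom cBool) (Concept.atom cTrue) →
      τ.vioCount I = 0) ↔
      Disjoint (I.cI cTrue) (I.cI cFalse) ∧
      (Concept.ex (Role.name rClause) (Concept.atom cFalse)).interp I ⊆ I.cI cTrue ∧
      I.cI cVar ⊆ (Concept.ex (Role.name rVal) (Concept.atom cBool)).interp I ∧
      (Concept.ex (Role.name rVal) (Concept.atom cTrue)).interp I ⊆ I.cI cTrue ∧
      (Concept.ex (Role.name rVal) (Concept.atom cFalse)).interp I ⊆ I.cI cFalse ∧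
      ∀ f : Fin 3 → Bool, (comboCNF f 0).interp I ∩ (comboCNF f 1).interp I ∩
        (comboCNF f 2).interp I ⊆ I.cI cFalse := by
  rw [forall_mem_cnfTbox]
  simp [Axiom.vioCount_ci_eq_zero_iff, Set.disjoint_iff_inter_eq_empty, Concept.interp]

end Encoding

section Soundness

variable (I : Interp U)

lemma bool_subset_true_union_false {a : U}
    (hβ : (Axiom.ci (Concept.atom cBool) (Concept.atom cTrue)).vioCount I ≤ 1)
    (haBool : a ∈ I.cI cBool) (haFalse : a ∈ I.cI cFalse) (haTrue : a ∉ I.cI cTrue) :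
    I.cI cBool ⊆ I.cI cTrue ∪ I.cI cFalse := by
  intro e heBool
  by_cases heTrue : e ∈ I.cI cTrue
  · exact Or.inl heTrue
  · obtain rfl : e = a := Set.encard_le_one_iff.1 hβ e a ⟨heBool, heTrue⟩ ⟨haBool, haTrue⟩
    exact Or.inr haFalse

lemma var_subset_true_union_false (hBool : I.cI cBool ⊆ I.cI cTrue ∪ I.cI cFalse)
    (hVar : I.cI cVar ⊆ (Concept.ex (Role.name rVal) (Concept.atom cBool)).interp I)
    (hValTrue : (Concept.ex (Role.name rVal) (Concept.atom cTrue)).interp I ⊆ I.cI cTrue)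
    (hValFalse : (Concept.ex (Role.name rVal) (Concept.atom cFalse)).interp I ⊆ I.cI cFalse) :
    I.cI cVar ⊆ I.cI cTrue ∪ I.cI cFalse := by
  intro x hx
  obtain ⟨e, hxe, he⟩ := hVar hx
  rcases hBool he with heTrue | heFalse
  · exact Or.inl (hValTrue ⟨e, hxe, heTrue⟩)
  · exact Or.inr (hValFalse ⟨e, hxe, heFalse⟩)

open Classical in
lemma mem_litFalse_of_decide_ne {x : U} (hx : x ∈ I.cI cTrue ∪ I.cI cFalse) {b : Bool}
    (hb : decide (x ∈ I.cI cTrue) ≠ b) : x ∈ I.cI (litFalse b) := by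
  cases b <;> simp_all [litFalse]

variable {ℓ n : ℕ} {φ : Fin ℓ → Fin 3 → Bool × Fin n}

open Classical in
theorem exists_satisfying_assignment_of_vioCount_le_one (hA : ∀ α ∈ cnfAbox ℓ n φ, α.sat I)
    (hT : ∀ τ ∈ cnfTbox, τ ≠ Axiom.ci (Concept.atom cBool) (Concept.atom cTrue) →
      τ.vioCount I = 0)
    (hβ : (Axiom.ci (Concept.atom cBool) (Concept.atom cTrue)).vioCount I ≤ 1) :
    ∃ ν : Fin n → Bool, ∀ i : Fin ℓ, ∃ j : Fin 3, ν (φ i j).2 = (φ i j).1 := by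
  obtain ⟨haFalse, haBool, hVar, hClause, hLit⟩ := forall_mem_cnfAbox.1 hA
  obtain ⟨hTrueFalse, hClauseFalse, hVarVal, hValTrue, hValFalse, hCombo⟩ :=
    (cnfTbox_vioCount_eq_zero_iff I).1 hT
  have haTrue : I.indI aN ∉ I.cI cTrue := fun h => Set.disjoint_left.1 hTrueFalse h haFalse
  have hVarTrueFalse := var_subset_true_union_false I
    (bool_subset_true_union_false I hβ haBool haFalse haTrue) hVarVal hValTrue hValFalse
  refine ⟨fun k => decide (I.indI (vN n k) ∈ I.cI cTrue), fun i => ?_⟩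
  by_contra! hfalse
  have hcombo : ∀ j, I.indI (cN n ℓ i) ∈ (comboCNF (fun j => (φ i j).1) j).interp I := by
    intro j
    rw [comboCNF_eq]
    exact ⟨_, hLit i j, mem_litFalse_of_decide_ne I (hVarTrueFalse (hVar _)) (hfalse j)⟩
  exact haTrue (hClauseFalse ⟨_, hClause i, hCombo _ ⟨⟨hcombo 0, hcombo 1⟩, hcombo 2⟩⟩)

end Soundness

section Completeness

variable {ℓ n : ℕ} (φ : Fin ℓ → Fin 3 → Bool × Fin n) (ν : Fin n → Bool)

def trueVal (n ℓ : ℕ) : ℕ := 1 + n + ℓ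

@[simp] lemma trueVal_ne_aN : trueVal n ℓ ≠ aN := by
  show 1 + n + ℓ ≠ 0; omega

@[simp] lemma aN_ne_trueVal : aN ≠ trueVal n ℓ := trueVal_ne_aN.symm

@[simp] lemma trueVal_ne_vN (k : Fin n) : trueVal n ℓ ≠ vN n k := by
  show 1 + n + ℓ ≠ 1 + (k : ℕ); omega

@[simp] lemma vN_ne_trueVal (k : Fin n) : vN n k ≠ trueVal n ℓ := (trueVal_ne_vN k).symm

def cnfModel : Interp ℕ where
  dom := Set.univ
  indI := id
  cI A :=
    if A = cFalse then insert aN (vN n '' {k | ν k = false})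
    else if A = cBool then {aN, trueVal n ℓ}
    else if A = cTrue then insert (trueVal n ℓ) (vN n '' {k | ν k = true})
    else if A = cVar then Set.range (vN n)
    else ∅
  rI r :=
    if r = rClause then Set.range fun i => (aN, cN n ℓ i)
    else if r = rVal then Set.range fun k => (vN n k, if ν k then trueVal n ℓ else aN)
    else {p | ∃ i j, litRole (φ i j).1 j = r ∧ p = (cN n ℓ i, vN n (φ i j).2)}
  cI_sub _ := Set.subset_univ _
  rI_sub _ _ _ := ⟨trivial, trivial⟩

@[simp] lemma cnfModel_cFalse :
    (cnfModel φ ν).cI cFalse = insert aN (vN n '' {k | ν k = false}) := rfl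

@[simp] lemma cnfModel_cBool : (cnfModel φ ν).cI cBool = {aN, trueVal n ℓ} := rfl

@[simp] lemma cnfModel_cTrue :
    (cnfModel φ ν).cI cTrue = insert (trueVal n ℓ) (vN n '' {k | ν k = true}) := rfl

@[simp] lemma cnfModel_cVar : (cnfModel φ ν).cI cVar = Set.range (vN n) := rfl

@[simp] lemma cnfModel_rClause :
    (cnfModel φ ν).rI rClause = Set.range fun i => (aN, cN n ℓ i) := rfl

@[simp] lemma cnfModel_litRole (b : Bool) (j : Fin 3) : (cnfModel φ ν).rI (litRole b j) =
    {p | ∃ i, (φ i j).1 = b ∧ p = (cN n ℓ i, vN n (φ i j).2)} := by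
  ext p
  simp [cnfModel, litRole_ne_rClause, litRole_ne_rVal, litRole_inj]

@[simp] lemma cnfModel_indI : (cnfModel φ ν).indI = id := rfl

lemma cnfModel_sat_cnfAbox : ∀ α ∈ cnfAbox ℓ n φ, α.sat (cnfModel φ ν) := by
  rw [forall_mem_cnfAbox]
  simp [Assertion.sat]

lemma cnfModel_vioCount_bool_le_one :
    (Axiom.ci (Concept.atom cBool) (Concept.atom cTrue)).vioCount (cnfModel φ ν) ≤ 1 := by
  have : vioCI (cnfModel φ ν) (Concept.atom cBool) (Concept.atom cTrue) ⊆ {aN} := by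
    simp [vioCI, Concept.interp]
  exact (Set.encard_le_encard this).trans (Set.encard_singleton _).le

lemma vN_mem_cnfModel_litFalse_iff (k : Fin n) (b : Bool) :
    vN n k ∈ (cnfModel φ ν).cI (litFalse b) ↔ ν k ≠ b := by
  cases b <;> simp [litFalse]

lemma mem_comboCNF_cnfModel_iff (f : Fin 3 → Bool) (j : Fin 3) (x : ℕ) :
    x ∈ (comboCNF f j).interp (cnfModel φ ν) ↔
      ∃ i, (φ i j).1 = f j ∧ ν (φ i j).2 ≠ f j ∧ x = cN n ℓ i := by
  rw [comboCNF_eq]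
  simp only [Concept.interp_ex_name, cnfModel_litRole, Concept.interp_atom]
  constructor
  · rintro ⟨_, ⟨i, hsign, hp⟩, he⟩
    obtain ⟨rfl, rfl⟩ := Prod.mk.inj hp
    exact ⟨i, hsign, (vN_mem_cnfModel_litFalse_iff φ ν _ _).1 he, rfl⟩
  · rintro ⟨i, hsign, hfalse, rfl⟩
    exact ⟨_, ⟨i, hsign, rfl⟩, (vN_mem_cnfModel_litFalse_iff φ ν _ _).2 hfalse⟩

lemma cnfModel_comboCNF_inter_eq_empty (hν : ∀ i : Fin ℓ, ∃ j : Fin 3, ν (φ i j).2 = (φ i j).1)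
    (f : Fin 3 → Bool) :
    (comboCNF f 0).interp (cnfModel φ ν) ∩ (comboCNF f 1).interp (cnfModel φ ν) ∩
      (comboCNF f 2).interp (cnfModel φ ν) = ∅ := by
  refine Set.eq_empty_of_forall_notMem fun x ⟨⟨h0, h1⟩, h2⟩ => ?_
  obtain ⟨i, -, -, rfl⟩ := (mem_comboCNF_cnfModel_iff φ ν f 0 x).1 h0
  obtain ⟨j, hj⟩ := hν i
  have hj_mem : cN n ℓ i ∈ (comboCNF f j).interp (cnfModel φ ν) := by
    fin_cases j <;> assumption
  obtain ⟨i', hsign, hfalse, hi'⟩ := (mem_comboCNF_cnfModel_iff φ ν f j _).1 hj_mem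
  obtain rfl := cN_inj.1 hi'
  exact hfalse (hj.trans hsign)

lemma cnfModel_vioCount_eq_zero (hν : ∀ i : Fin ℓ, ∃ j : Fin 3, ν (φ i j).2 = (φ i j).1) :
    ∀ τ ∈ cnfTbox, τ ≠ Axiom.ci (Concept.atom cBool) (Concept.atom cTrue) →
      τ.vioCount (cnfModel φ ν) = 0 := by
  rw [cnfTbox_vioCount_eq_zero_iff]
  refine ⟨?trueFalse, ?clause, ?var, ?valTrue, ?valFalse,
    fun f => (cnfModel_comboCNF_inter_eq_empty φ ν hν f).subset.trans (Set.empty_subset _)⟩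
  case trueFalse =>
    simp only [cnfModel_cTrue, cnfModel_cFalse, Set.disjoint_insert_left,
      Set.disjoint_insert_right]
    simp [Set.disjoint_left]
    rintro k hk _ hk' rfl
    simp_all
  case clause => simp
  case var =>
    rintro _ ⟨k, rfl⟩
    exact ⟨_, ⟨k, rfl⟩, by cases ν k <;> simp⟩
  case valTrue =>
    rintro _ ⟨_, ⟨k, hk⟩, he⟩
    obtain ⟨rfl, rfl⟩ := Prod.mk.inj hk
    cases hνk : ν k <;> simp_all
  case valFalse =>
    rintro _ ⟨_, ⟨k, hk⟩, he⟩
    obtain ⟨rfl, rfl⟩ := Prod.mk.inj hk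
    cases hνk : ν k <;> simp_all

end Completeness

/-- A 3-CNF formula `φ` is satisfiable iff the `EL_⊥` WKB
`(T, A_φ)_ω` is `1`-satisfiable, where `ω` assigns `∞` to every axiom and assertion
except `Bool ⊑ True`, which gets weight `1`. -/
theorem statement11 (ℓ n : ℕ) (φ : Fin ℓ → Fin 3 → Bool × Fin n) :
    (∃ ν : Fin n → Bool, ∀ i : Fin ℓ, ∃ j : Fin 3, ν (φ i j).2 = (φ i j).1) ↔
      ksat cnfTbox (cnfAbox ℓ n φ)
        (fun τ => if τ = Axiom.ci (Concept.atom cBool) (Concept.atom cTrue) then 1 else ⊤)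
        (fun _ => ⊤) 1 := by
  have hβ : Axiom.ci (Concept.atom cBool) (Concept.atom cTrue) ∈ cnfTbox := by simp [cnfTbox]
  have hcost {U : Type} (I : Interp U) := cost_le_iff_of_hard_except (A := cnfAbox ℓ n φ) (w := 1)
    hβ (ENat.natCast_ne_top 1) I
  constructor
  · rintro ⟨ν, hν⟩
    refine ⟨ℕ, cnfModel φ ν, fun _ => trivial, (hcost _).2 ⟨cnfModel_sat_cnfAbox φ ν,
      cnfModel_vioCount_eq_zero φ ν hν, ?_⟩⟩
    simpa using cnfModel_vioCount_bool_le_one φ ν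
  · rintro ⟨U, I, -, hI⟩
    obtain ⟨hA, hT, hβI⟩ := (hcost I).1 hI
    exact exists_satisfying_assignment_of_vioCount_le_one I hA hT (by simpa using hβI)

end DL
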